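/- Let P be a partition-sequence of {0,1}^n whose size sequence is a block-sequence, I_P the associated monotone step mapping, and for 0 ≤ i ≤ n, 0 ≤ j < 2^{n-i}, let V_{i,j} = {X_l : j·2^i ≤ l < (j+1)·2^i} be the j-th block of level i. Then for every i and j, the inverse image I_P^{-1}(V_{i,j}) is a union of consecutive blocks of level i: there exist k ≤ k' in [0, 2^{n-i}] (possibly an empty union) with I_P^{-1}(V_{i,j}) = ⋃_{k ≤ l ≤ k'} V_{i,l}. -/

import Mathlib

/-- Index of a boolean vector: `φ(x) = x_1 + 2x_2 + ⋯ + 2^{n-1}x_n`. -/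
def idx {n : ℕ} (x : Fin n → Fin 2) : ℕ := ∑ i, (x i : ℕ) * 2 ^ (i : ℕ)

/-- Cumulative sum of the sizes of the first `k` parts of a partition-sequence. -/
def csum {n : ℕ} (P : Fin (2 ^ n) → Finset (Fin n → Fin 2)) (k : ℕ) : ℕ :=
  ∑ l ∈ Finset.univ.filter (fun l : Fin (2 ^ n) => (l : ℕ) < k), (P l).card

lemma csum_mono {n : ℕ} (P : Fin (2 ^ n) → Finset (Fin n → Fin 2)) {a b : ℕ}
    (h : a ≤ b) : csum P a ≤ csum P b := by
  apply Finset.sum_le_sum_of_subset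
  intro l hl
  simp only [Finset.mem_filter, Finset.mem_univ, true_and] at hl ⊢
  omega

lemma csum_split {n : ℕ} (P : Fin (2 ^ n) → Finset (Fin n → Fin 2)) {a b : ℕ}
    (h : a ≤ b) :
    csum P b = csum P a + ∑ l ∈ Finset.univ.filter
      (fun l : Fin (2 ^ n) => a ≤ (l : ℕ) ∧ (l : ℕ) < b), (P l).card := by
  unfold csum
  rw [← Finset.sum_union]
  · congr 1
    ext l
    simp only [Finset.mem_union, Finset.mem_filter, Finset.mem_univ, true_and]
    omega
  · rw [Finset.disjoint_filter]
    intro l _ hl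
    omega

lemma csum_le {n : ℕ} (P : Fin (2 ^ n) → Finset (Fin n → Fin 2))
    (hdisj : ∀ l l' : Fin (2 ^ n), l ≠ l' → Disjoint (P l) (P l')) (k : ℕ) :
    csum P k ≤ 2 ^ n := by
  calc csum P k ≤ ∑ l : Fin (2 ^ n), (P l).card := by
        apply Finset.sum_le_sum_of_subset
        intro l _; simp
    _ = (Finset.univ.biUnion P).card := by
        rw [Finset.card_biUnion]
        intro l _ l' _ h
        exact hdisj l l' h
    _ ≤ Fintype.card (Fin n → Fin 2) := Finset.card_le_univ _
    _ = 2 ^ n := by simp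

/-- If the size sequence of a partition-sequence `P` is a block-sequence, the
inverse image under `I_P` of any block `V_{i,j}` of level `i` is a union of
consecutive blocks of level `i`. -/
theorem blockseq_preimage_of_block_is_consecutive_blocks
    (n : ℕ) (P : Fin (2 ^ n) → Finset (Fin n → Fin 2))
    (hdisj : ∀ l l' : Fin (2 ^ n), l ≠ l' → Disjoint (P l) (P l'))
    (hcover : ∀ x : Fin n → Fin 2, ∃ l, x ∈ P l)
    (hblock : ∀ i ≤ n, ∀ j < 2 ^ (n - i),
      2 ^ i ∣ ∑ l ∈ Finset.univ.filter
        (fun l : Fin (2 ^ n) => j * 2 ^ i ≤ (l : ℕ) ∧ (l : ℕ) < (j + 1) * 2 ^ i),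
        (P l).card)
    (I : (Fin n → Fin 2) → (Fin n → Fin 2))
    (hI : ∀ x, csum P (idx (I x)) ≤ idx x ∧ idx x < csum P (idx (I x) + 1)) :
    ∀ i ≤ n, ∀ j < 2 ^ (n - i),
      ∃ a b : ℕ, a ≤ b ∧ b ≤ 2 ^ (n - i) ∧
        ∀ x : Fin n → Fin 2,
          (j * 2 ^ i ≤ idx (I x) ∧ idx (I x) < (j + 1) * 2 ^ i) ↔
          (a * 2 ^ i ≤ idx x ∧ idx x < b * 2 ^ i) := by
  intro i hi j hj
  -- divisibility of csum at multiples of 2^i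
  have hdvd : ∀ m ≤ 2 ^ (n - i), 2 ^ i ∣ csum P (m * 2 ^ i) := by
    intro m hm
    induction m with
    | zero =>
        have : csum P 0 = 0 := by
          unfold csum
          apply Finset.sum_eq_zero
          intro l hl
          simp at hl
        simp [this]
    | succ m ih =>
        have hm' : m ≤ 2 ^ (n - i) := by omega
        have hlt : m < 2 ^ (n - i) := by omega
        have hsplit := csum_split P (a := m * 2 ^ i) (b := (m + 1) * 2 ^ i)
          (by nlinarith [pow_pos (show 0 < 2 by norm_num) i])
        rw [hsplit]
        exact Nat.dvd_add (ih hm') (hblock i hi m hlt)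
  have hpow : 0 < 2 ^ i := pow_pos (by norm_num) i
  obtain ⟨a, ha⟩ := hdvd j (le_of_lt hj)
  obtain ⟨b, hb⟩ := hdvd (j + 1) hj
  refine ⟨a, b, ?_, ?_, ?_⟩
  · have : csum P (j * 2 ^ i) ≤ csum P ((j + 1) * 2 ^ i) :=
      csum_mono P (by nlinarith)
    rw [ha, hb] at this
    exact Nat.le_of_mul_le_mul_left (by linarith [this]) hpow
  · have : csum P ((j + 1) * 2 ^ i) ≤ 2 ^ n := csum_le P hdisj _
    rw [hb] at this
    have h2n : (2 : ℕ) ^ n = 2 ^ i * 2 ^ (n - i) := by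
      rw [← pow_add]; congr 1; omega
    rw [h2n] at this
    exact Nat.le_of_mul_le_mul_left this hpow
  · intro x
    obtain ⟨h1, h2⟩ := hI x
    constructor
    · rintro ⟨hl, hr⟩
      constructor
      · have : csum P (j * 2 ^ i) ≤ csum P (idx (I x)) := csum_mono P hl
        rw [ha] at this
        calc a * 2 ^ i = 2 ^ i * a := by ring
          _ ≤ idx x := le_trans this h1
      · have : csum P (idx (I x) + 1) ≤ csum P ((j + 1) * 2 ^ i) :=
          csum_mono P (by omega)
        rw [hb] at this
        calc idx x < csum P (idx (I x) + 1) := h2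
          _ ≤ b * 2 ^ i := by linarith [this]
    · rintro ⟨hl, hr⟩
      constructor
      · by_contra hcon
        push_neg at hcon
        have : csum P (idx (I x) + 1) ≤ csum P (j * 2 ^ i) :=
          csum_mono P (by omega)
        rw [ha] at this
        have : idx x < a * 2 ^ i := by
          calc idx x < csum P (idx (I x) + 1) := h2
            _ ≤ a * 2 ^ i := by linarith [this]
        omega
      · by_contra hcon
        push_neg at hcon
        have : csum P ((j + 1) * 2 ^ i) ≤ csum P (idx (I x)) := csum_mono P hcon
        rw [hb] at this
        have : b * 2 ^ i ≤ idx x := by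
          calc b * 2 ^ i = 2 ^ i * b := by ring
            _ ≤ csum P (idx (I x)) := this
            _ ≤ idx x := h1
        omega
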